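/- Under the setting of the preceding replace-one-sample construction, suppose additionally that φ is differentiable with each ℓ(·, ξ) σ-almost convex and β-smooth, and that (γ − σ)b ≥ 2(σ + β). Then ‖ŵ⁽ⁱ⁾ − ŵ‖ ≤ (2/((γ − σ)b)) · ( ‖∇ℓ(ŵ⁽ⁱ⁾, ξ_i) − ∇φ(ŵ⁽ⁱ⁾)‖ + ‖∇ℓ(ŵ, ξ_i') − ∇φ(ŵ)‖ ), where ŵ minimizes F̂(w) = (1/b)Σ_{j=1}^b ℓ(w, ξ_j) + r(w), ŵ⁽ⁱ⁾ minimizes the objective obtained by replacing sample ξ_i with ξ_i', and r is γ-strongly convex with γ > σ. -/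

import Mathlib

open MeasureTheory
open scoped RealInnerProductSpace

/-!
Write `Δ = ŵ⁽ⁱ⁾ - ŵ`. Both empirical objectives are `(γ - σ)`-strongly convex, so the growth of
each one away from its minimizer, added over the two objectives, gives
`(γ - σ) ‖Δ‖² ≤ b⁻¹ (ℓ(ŵ⁽ⁱ⁾, ξᵢ) - ℓ(ŵ, ξᵢ) + ℓ(ŵ, ξᵢ') - ℓ(ŵ⁽ⁱ⁾, ξᵢ'))`. Almost convexity
bounds the bracket by `⟪∇ℓ(ŵ⁽ⁱ⁾, ξᵢ) - ∇ℓ(ŵ, ξᵢ'), Δ⟫ + σ ‖Δ‖²`; centering both gradients at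
`∇φ` and using `⟪∇φ(ŵ⁽ⁱ⁾) - ∇φ(ŵ), Δ⟫ ≤ β ‖Δ‖²` leaves a quadratic inequality in `‖Δ‖`, which
`(γ - σ) b ≥ 2 (σ + β)` turns into the bound.

The last inequality needs care: `∇φ` is a Bochner integral, hence `0` wherever `ℓ'(w, ·)` fails
to be integrable. The integrable parameters form a closed set on which `∇φ` is `β`-Lipschitz, and
on a segment leaving that set the last point inside it is a critical point of `φ` along the
segment.
-/

open Set Filter InnerProductSpace

lemma eq_zero_of_hasDerivAt_of_eq_zero_on_Ioc {ψ ψ' : ℝ → ℝ} {a c : ℝ} (hac : a < c)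
    (hψ : ∀ t ∈ Icc a c, HasDerivAt ψ (ψ' t) t) (h0 : ∀ t ∈ Ioc a c, ψ' t = 0) :
    ψ' a = 0 := by
  have hconst : ∀ t ∈ Icc a c, ψ t = ψ a := by
    rintro t ⟨hat, htc⟩
    rcases hat.eq_or_lt with rfl | hat
    · rfl
    obtain ⟨s, hs, hslope⟩ := exists_hasDerivAt_eq_slope ψ ψ' hat
      (fun u hu => (hψ u ⟨hu.1, hu.2.trans htc⟩).continuousAt.continuousWithinAt)
      (fun u hu => hψ u ⟨hu.1.le, hu.2.le.trans htc⟩)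
    rw [h0 s ⟨hs.1, hs.2.le.trans htc⟩, eq_comm, div_eq_zero_iff, sub_eq_zero] at hslope
    exact hslope.resolve_right (sub_ne_zero.2 hat.ne')
  have hright : HasDerivWithinAt ψ 0 (Ici a) a :=
    (hasDerivWithinAt_const a _ (ψ a)).congr_of_eventuallyEq
      (eventually_of_mem (Icc_mem_nhdsGE hac) hconst) rfl
  exact (uniqueDiffWithinAt_Ici a).eq_deriv _ (hψ a ⟨le_rfl, hac.le⟩).hasDerivWithinAt hright

lemma exists_mem_Icc_deriv_eq_zero_of_eq_zero_off {ψ ψ' : ℝ → ℝ} {T : Set ℝ} {a c : ℝ}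
    (hac : a ≤ c) (hT : IsClosed T) (haT : a ∈ T) (hcT : c ∉ T)
    (hψ : ∀ t ∈ Icc a c, HasDerivAt ψ (ψ' t) t) (hoff : ∀ t ∈ Icc a c, t ∉ T → ψ' t = 0) :
    ∃ t ∈ T ∩ Icc a c, ψ' t = 0 := by
  have hcpt : IsCompact (T ∩ Icc a c) := isCompact_Icc.inter_left hT
  have hmem := hcpt.sSup_mem ⟨a, haT, le_rfl, hac⟩
  have hlast : sSup (T ∩ Icc a c) < c :=
    hmem.2.2.lt_of_ne fun h => hcT (h ▸ hmem.1)
  refine ⟨_, hmem, eq_zero_of_hasDerivAt_of_eq_zero_on_Ioc hlast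
    (fun t ht => hψ t ⟨hmem.2.1.trans ht.1, ht.2⟩) fun t ht => ?_⟩
  refine hoff t ⟨hmem.2.1.trans ht.1.le, ht.2⟩ fun htT => ht.1.not_ge ?_
  exact le_csSup hcpt.bddAbove ⟨htT, hmem.2.1.trans ht.1.le, ht.2⟩

section Integrable

variable {E Ξ F : Type*} [SeminormedAddCommGroup E] [MeasurableSpace Ξ] {D : Measure Ξ}
  [NormedAddCommGroup F] {g : E → Ξ → F} {β : ℝ}

lemma isClosed_setOf_integrable [IsFiniteMeasure D]
    (hg : ∀ ξ w w', ‖g w ξ - g w' ξ‖ ≤ β * ‖w - w'‖) :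
    IsClosed {w | Integrable (g w) D} := by
  refine IsSeqClosed.isClosed fun u p hu hup => ?_
  have hcont : ∀ ξ, Continuous (g · ξ) := fun ξ =>
    (LipschitzWith.of_dist_le' (K := β) fun w w' => by
      simpa only [dist_eq_norm] using hg ξ w w').continuous
  have hmeas : AEStronglyMeasurable (g p) D :=
    aestronglyMeasurable_of_tendsto_ae atTop (fun n => (hu n).aestronglyMeasurable)
      (Eventually.of_forall fun ξ => ((hcont ξ).tendsto p).comp hup)
  refine ((hu 0).norm.add (integrable_const (β * ‖p - u 0‖))).mono' hmeas
    (Eventually.of_forall fun ξ => ?_)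
  simp only [Pi.add_apply]
  exact (norm_le_norm_add_norm_sub' _ (g (u 0) ξ)).trans (by gcongr; exact hg ξ p (u 0))

lemma norm_integral_sub_integral_le [NormedSpace ℝ F] [IsProbabilityMeasure D]
    (hg : ∀ ξ w w', ‖g w ξ - g w' ξ‖ ≤ β * ‖w - w'‖) {x y : E}
    (hx : Integrable (g x) D) (hy : Integrable (g y) D) :
    ‖∫ ξ, g x ξ ∂D - ∫ ξ, g y ξ ∂D‖ ≤ β * ‖x - y‖ := by
  rw [← integral_sub hx hy]
  simpa using norm_integral_le_of_norm_le_const (μ := D) (Eventually.of_forall (hg · x y))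

end Integrable

section Gradient

variable {E : Type*} [NormedAddCommGroup E] [InnerProductSpace ℝ E] [CompleteSpace E]

lemma IsLocalMin.hasGradientAt_eq_zero {f : E → ℝ} {f' a : E} (h : IsLocalMin f a)
    (hf : HasGradientAt f f' a) : f' = 0 := by
  simpa using congrArg (toDual ℝ E).symm (h.hasFDerivAt_eq_zero hf.hasFDerivAt)

lemma HasGradientAt.hasDerivAt_comp_lineMap {f : E → ℝ} {f' x d : E} {t : ℝ}
    (hf : HasGradientAt f f' (x + t • d)) :
    HasDerivAt (fun s : ℝ => f (x + s • d)) ⟪f', d⟫ t := by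
  have hline : HasDerivAt (fun s : ℝ => x + s • d) d t := by
    simpa using ((hasDerivAt_id t).smul_const d).const_add x
  have h := hf.hasFDerivAt.comp_hasDerivAt t hline
  simp only [toDual_apply_apply] at h
  exact h

variable {f : E → ℝ} {f' : E → E} {S : Set E} {L : ℝ}

/-- The segment from `x ∈ S` to `y ∉ S` leaves `S` for good at a critical point `z` of `f` in
the direction `y - x`; the Lipschitz bound on `S` then applies to the pair `x, z`. -/
lemma inner_gradient_sub_le_of_mem_of_notMem (hL : 0 ≤ L) (hS : IsClosed S)
    (hf : ∀ w, HasGradientAt f (f' w) w)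
    (hLip : ∀ x ∈ S, ∀ y ∈ S, ‖f' x - f' y‖ ≤ L * ‖x - y‖) (hoff : ∀ w ∉ S, f' w = 0)
    {x y : E} (hx : x ∈ S) (hy : y ∉ S) :
    ⟪f' x - f' y, x - y⟫ ≤ L * ‖x - y‖ ^ 2 := by
  set d := y - x
  have hT : IsClosed ((fun t : ℝ => x + t • d) ⁻¹' S) := hS.preimage (by fun_prop)
  obtain ⟨t, ⟨htS, ht0, ht1⟩, hcrit⟩ :=
    exists_mem_Icc_deriv_eq_zero_of_eq_zero_off zero_le_one hT (by simpa using hx)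
      (by simpa [d] using hy) (fun t _ => (hf _).hasDerivAt_comp_lineMap)
      fun t _ htS => by rw [hoff _ htS, inner_zero_left]
  have hdist : ‖x - (x + t • d)‖ = t * ‖x - y‖ := by
    rw [sub_add_cancel_left, norm_neg, norm_smul, Real.norm_of_nonneg ht0, norm_sub_rev]
  have hcrit' : ⟪f' (x + t • d), x - y⟫ = 0 := by
    rw [← neg_sub, inner_neg_right, hcrit, neg_zero]
  calc ⟪f' x - f' y, x - y⟫ = ⟪f' x - f' (x + t • d), x - y⟫ := by
        rw [hoff y hy, inner_sub_left, inner_sub_left, hcrit', inner_zero_left]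
    _ ≤ ‖f' x - f' (x + t • d)‖ * ‖x - y‖ := real_inner_le_norm _ _
    _ ≤ L * (t * ‖x - y‖) * ‖x - y‖ := by
        gcongr
        exact hdist ▸ hLip x hx _ htS
    _ ≤ L * ‖x - y‖ ^ 2 := by
        rw [sq, ← mul_assoc, mul_comm L t, mul_assoc t]
        nlinarith [mul_nonneg (mul_nonneg hL (norm_nonneg (x - y))) (norm_nonneg (x - y))]

lemma inner_gradient_sub_le (hL : 0 ≤ L) (hS : IsClosed S) (hf : ∀ w, HasGradientAt f (f' w) w)
    (hLip : ∀ x ∈ S, ∀ y ∈ S, ‖f' x - f' y‖ ≤ L * ‖x - y‖) (hoff : ∀ w ∉ S, f' w = 0)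
    (x y : E) : ⟪f' x - f' y, x - y⟫ ≤ L * ‖x - y‖ ^ 2 := by
  by_cases hx : x ∈ S <;> by_cases hy : y ∈ S
  · exact (real_inner_le_norm _ _).trans (by nlinarith [hLip x hx y hy, norm_nonneg (x - y)])
  · exact inner_gradient_sub_le_of_mem_of_notMem hL hS hf hLip hoff hx hy
  · rw [← neg_sub (f' y), ← neg_sub y, inner_neg_neg, norm_neg]
    exact inner_gradient_sub_le_of_mem_of_notMem hL hS hf hLip hoff hy hx
  · rw [hoff x hx, hoff y hy, sub_zero, inner_zero_left]
    positivity

end Gradient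

lemma inner_integral_sub_le {E Ξ : Type*} [NormedAddCommGroup E] [InnerProductSpace ℝ E]
    [CompleteSpace E] [MeasurableSpace Ξ] {D : Measure Ξ} [IsProbabilityMeasure D]
    {ℓ' : E → Ξ → E} {φ : E → ℝ} {φ' : E → E} {β : ℝ} (hβ : 0 ≤ β)
    (hℓ' : ∀ ξ w w', ‖ℓ' w ξ - ℓ' w' ξ‖ ≤ β * ‖w - w'‖) (hφ : ∀ w, HasGradientAt φ (φ' w) w)
    (hmean : ∀ w, ∫ ξ, ℓ' w ξ ∂D = φ' w) (x y : E) :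
    ⟪φ' x - φ' y, x - y⟫ ≤ β * ‖x - y‖ ^ 2 :=
  inner_gradient_sub_le hβ (isClosed_setOf_integrable hℓ') hφ
    (fun x hx y hy => hmean x ▸ hmean y ▸ norm_integral_sub_integral_le hℓ' hx hy)
    (fun w hw => hmean w ▸ integral_undef hw) x y

lemma le_two_div_mul_of_mul_sq_le {c a κ N : ℝ} (hc : 0 < c) (ha : 0 ≤ a) (hN : 0 ≤ N)
    (hκ : 2 * κ ≤ c) (h : c * N ^ 2 ≤ a * N + κ * N ^ 2) : N ≤ 2 / c * a := by
  rcases hN.eq_or_lt with rfl | hN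
  · positivity
  rw [div_mul_eq_mul_div, le_div_iff₀ hc]
  nlinarith [mul_le_mul_of_nonneg_right hκ (sq_nonneg N)]

lemma inner_sub_le_add_inner_sub {E : Type*} [NormedAddCommGroup E] [InnerProductSpace ℝ E]
    (a b p q d : E) : ⟪a - b, d⟫ ≤ (‖a - p‖ + ‖b - q‖) * ‖d‖ + ⟪p - q, d⟫ := by
  have hsplit : a - b = (a - p) + (q - b) + (p - q) := by abel
  have hq : ⟪q - b, d⟫ ≤ ‖b - q‖ * ‖d‖ := norm_sub_rev b q ▸ real_inner_le_norm _ _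
  rw [hsplit, inner_add_left, inner_add_left]
  linarith [real_inner_le_norm (a - p) d]

section Modulus

variable {E : Type*} [NormedAddCommGroup E] [InnerProductSpace ℝ E]

/-- Negative `μ` is allowed: `σ`-almost convexity is modulus `-σ`, `γ`-strong convexity is
modulus `γ`. -/
def HasConvexityModulus (μ : ℝ) (f : E → ℝ) (f' : E → E) : Prop :=
  ∀ w w', μ / 2 * ‖w - w'‖ ^ 2 ≤ f w - f w' - ⟪f' w', w - w'⟫

namespace HasConvexityModulus

variable {μ ν : ℝ} {f g : E → ℝ} {f' g' : E → E}

lemma add (hf : HasConvexityModulus μ f f') (hg : HasConvexityModulus ν g g') :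
    HasConvexityModulus (μ + ν) (fun w => f w + g w) (fun w => f' w + g' w) := by
  intro w w'
  rw [inner_add_left]
  linarith [hf w w', hg w w']

lemma average {ι : Type*} [Fintype ι] [Nonempty ι] {f : ι → E → ℝ} {f' : ι → E → E}
    (h : ∀ j, HasConvexityModulus μ (f j) (f' j)) :
    HasConvexityModulus μ (fun w => (Fintype.card ι : ℝ)⁻¹ * ∑ j, f j w)
      (fun w => (Fintype.card ι : ℝ)⁻¹ • ∑ j, f' j w) := by
  intro w w'
  have hsum := Finset.sum_le_sum fun j (_ : j ∈ Finset.univ) => h j w w'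
  rw [Finset.sum_const, Finset.card_univ, nsmul_eq_mul] at hsum
  rw [real_inner_smul_left, sum_inner, ← mul_sub, ← mul_sub, ← Finset.sum_sub_distrib,
    ← Finset.sum_sub_distrib, le_inv_mul_iff₀ (by exact_mod_cast Fintype.card_pos)]
  exact hsum

lemma le_sub_of_eq_zero (hf : HasConvexityModulus μ f f') {m : E} (hm : f' m = 0) (x : E) :
    μ / 2 * ‖x - m‖ ^ 2 ≤ f x - f m := by
  simpa [hm] using hf x m

lemma sub_add_sub_le (hf : HasConvexityModulus μ f f') (hg : HasConvexityModulus μ g g')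
    (x y : E) : f x - f y + (g y - g x) ≤ ⟪f' x - g' y, x - y⟫ - μ * ‖x - y‖ ^ 2 := by
  have hfyx := hf y x
  rw [← neg_sub x y, inner_neg_right, norm_neg] at hfyx
  rw [inner_sub_left]
  linarith [hg x y]

end HasConvexityModulus

end Modulus

section Empirical

variable {W Ξ M : Type*} [AddCommGroup M] [Module ℝ M]

/-- `F̂_ζ(w) = b⁻¹ ∑ⱼ ℓ(w, ζⱼ) + r(w)`; with the gradients `ℓ', r'` in place of `ℓ, r` it is
the gradient of `F̂_ζ`. -/
noncomputable def empiricalObjective (ℓ : W → Ξ → M) (r : W → M) {b : ℕ} (ζ : Fin b → Ξ)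
    (w : W) : M :=
  (b : ℝ)⁻¹ • ∑ j, ℓ w (ζ j) + r w

lemma empiricalObjective_update_sub (ℓ : W → Ξ → M) (r : W → M) {b : ℕ} (ζ : Fin b → Ξ)
    (i : Fin b) (a : Ξ) (w : W) :
    empiricalObjective ℓ r (Function.update ζ i a) w - empiricalObjective ℓ r ζ w
      = (b : ℝ)⁻¹ • (ℓ w a - ℓ w (ζ i)) := by
  have hsum : ∑ j, ℓ w (Function.update ζ i a j) = ℓ w a + ∑ j ∈ Finset.univ \ {i}, ℓ w (ζ j) := by
    simp_rw [Function.apply_update (fun _ => ℓ w)]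
    exact Finset.sum_update_of_mem (Finset.mem_univ i) _ _
  rw [empiricalObjective, empiricalObjective, hsum,
    Finset.sum_eq_add_sum_sdiff_singleton_of_mem (Finset.mem_univ i), smul_sub, smul_add, smul_add]
  abel

end Empirical

section EmpiricalGradient

variable {E Ξ : Type*} [NormedAddCommGroup E] [InnerProductSpace ℝ E]
  {ℓ : E → Ξ → ℝ} {ℓ' : E → Ξ → E} {r : E → ℝ} {r' : E → E} {b : ℕ}

lemma hasGradientAt_empiricalObjective [CompleteSpace E] (ζ : Fin b → Ξ) {w : E}
    (hℓ : ∀ ξ, HasGradientAt (ℓ · ξ) (ℓ' w ξ) w) (hr : HasGradientAt r (r' w) w) :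
    HasGradientAt (empiricalObjective ℓ r ζ) (empiricalObjective ℓ' r' ζ w) w := by
  have hsum : HasFDerivAt (fun x => ∑ j, ℓ x (ζ j)) (∑ j, toDual ℝ E (ℓ' w (ζ j))) w :=
    HasFDerivAt.fun_sum fun j _ => (hℓ (ζ j)).hasFDerivAt
  rw [hasGradientAt_iff_hasFDerivAt, empiricalObjective, map_add, map_smul, map_sum]
  exact (hsum.const_smul (b : ℝ)⁻¹).add hr.hasFDerivAt

lemma HasConvexityModulus.empiricalObjective {μ ν : ℝ} (hb : 0 < b)
    (hℓ : ∀ ξ, HasConvexityModulus μ (ℓ · ξ) (ℓ' · ξ)) (hr : HasConvexityModulus ν r r')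
    (ζ : Fin b → Ξ) :
    HasConvexityModulus (μ + ν) (empiricalObjective ℓ r ζ) (empiricalObjective ℓ' r' ζ) := by
  have : Nonempty (Fin b) := ⟨⟨0, hb⟩⟩
  have h := (HasConvexityModulus.average fun j => hℓ (ζ j)).add hr
  rw [Fintype.card_fin] at h
  exact h

lemma modulus_mul_norm_sub_sq_le_of_isMin_update [CompleteSpace E] {μ ν : ℝ} (hb : 0 < b)
    (hℓ : ∀ w ξ, HasGradientAt (ℓ · ξ) (ℓ' w ξ) w) (hr : ∀ w, HasGradientAt r (r' w) w)
    (hℓmod : ∀ ξ, HasConvexityModulus μ (ℓ · ξ) (ℓ' · ξ)) (hrmod : HasConvexityModulus ν r r')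
    {ζ : Fin b → Ξ} {i : Fin b} {a : Ξ} {w w' : E}
    (hw : ∀ x, empiricalObjective ℓ r ζ w ≤ empiricalObjective ℓ r ζ x)
    (hw' : ∀ x, empiricalObjective ℓ r (Function.update ζ i a) w'
      ≤ empiricalObjective ℓ r (Function.update ζ i a) x) :
    (μ + ν) * ‖w' - w‖ ^ 2 ≤ (b : ℝ)⁻¹ * (ℓ w' (ζ i) - ℓ w (ζ i) + (ℓ w a - ℓ w' a)) := by
  have hcrit : ∀ (η : Fin b → Ξ) m,
      (∀ x, empiricalObjective ℓ r η m ≤ empiricalObjective ℓ r η x) →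
        empiricalObjective ℓ' r' η m = 0 := fun η m hm =>
    IsLocalMin.hasGradientAt_eq_zero (Eventually.of_forall hm)
      (hasGradientAt_empiricalObjective η (hℓ m) (hr m))
  have hmod := HasConvexityModulus.empiricalObjective hb hℓmod hrmod
  have hgrowth := (hmod ζ).le_sub_of_eq_zero (hcrit _ _ hw) w'
  have hgrowth' := (hmod _).le_sub_of_eq_zero (hcrit _ _ hw') w
  have hswap := empiricalObjective_update_sub ℓ r ζ i a w
  have hswap' := empiricalObjective_update_sub ℓ r ζ i a w'
  rw [norm_sub_rev] at hgrowth'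
  simp only [smul_eq_mul] at hswap hswap'
  linarith

end EmpiricalGradient

theorem replace_one_sample_argument_stability_general
    {E : Type*} [NormedAddCommGroup E] [InnerProductSpace ℝ E] [CompleteSpace E]
    {Ξ : Type*} [MeasurableSpace Ξ] (D : Measure Ξ) [IsProbabilityMeasure D]
    (ℓ : E → Ξ → ℝ) (ℓ' : E → Ξ → E)
    (φ : E → ℝ) (φ' : E → E) (r : E → ℝ) (r' : E → E)
    (β σ γ : ℝ) (b : ℕ) (hb0 : 0 < b)
    (hγ : σ < γ)
    (hℓdiff : ∀ w ξ, HasGradientAt (fun x => ℓ x ξ) (ℓ' w ξ) w)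
    (hℓsmooth : ∀ ξ w w', ‖ℓ' w ξ - ℓ' w' ξ‖ ≤ β * ‖w - w'‖)
    (hℓalmost : ∀ ξ w w', ℓ w ξ - ℓ w' ξ - ⟪ℓ' w' ξ, w - w'⟫ ≥ -(σ / 2) * ‖w - w'‖ ^ 2)
    (hφdiff : ∀ w, HasGradientAt φ (φ' w) w)
    (hunbiased : ∀ w, ∫ ξ, ℓ' w ξ ∂D = φ' w)
    (hrdiff : ∀ w, HasGradientAt r (r' w) w)
    (hrstrong : ∀ w w', r w - r w' - ⟪r' w', w - w'⟫ ≥ γ / 2 * ‖w - w'‖ ^ 2)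
    (hsample : (γ - σ) * b ≥ 2 * (σ + β))
    (ξs : Fin b → Ξ) (i : Fin b) (ξ' : Ξ)
    (wHat wHatI : E)
    (hwHat : ∀ x, (b : ℝ)⁻¹ * ∑ j, ℓ wHat (ξs j) + r wHat
          ≤ (b : ℝ)⁻¹ * ∑ j, ℓ x (ξs j) + r x)
    (hwHatI : ∀ x,
        (b : ℝ)⁻¹ * ∑ j, ℓ wHatI (Function.update ξs i ξ' j) + r wHatI
          ≤ (b : ℝ)⁻¹ * ∑ j, ℓ x (Function.update ξs i ξ' j) + r x) :
    ‖wHatI - wHat‖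
      ≤ 2 / ((γ - σ) * b)
          * (‖ℓ' wHatI (ξs i) - φ' wHatI‖ + ‖ℓ' wHat ξ' - φ' wHat‖) := by
  have hc : 0 < (γ - σ) * b := mul_pos (sub_pos.2 hγ) (Nat.cast_pos.2 hb0)
  obtain hΔ | hΔ := eq_or_ne wHatI wHat
  · rw [hΔ, sub_self, norm_zero]
    positivity
  have hβ : 0 ≤ β := nonneg_of_mul_nonneg_left ((norm_nonneg _).trans (hℓsmooth ξ' wHatI wHat))
    (norm_pos_iff.2 (sub_ne_zero.2 hΔ))
  have hℓmod : ∀ ξ, HasConvexityModulus (-σ) (ℓ · ξ) (ℓ' · ξ) := fun ξ w w' => by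
    linarith [hℓalmost ξ w w']
  have hstab := modulus_mul_norm_sub_sq_le_of_isMin_update hb0 hℓdiff hrdiff hℓmod hrstrong
    hwHat hwHatI
  have hloss := (hℓmod (ξs i)).sub_add_sub_le (hℓmod ξ') wHatI wHat
  have hpop := inner_integral_sub_le hβ hℓsmooth hφdiff hunbiased wHatI wHat
  have hinner := inner_sub_le_add_inner_sub (ℓ' wHatI (ξs i)) (ℓ' wHat ξ') (φ' wHatI) (φ' wHat)
    (wHatI - wHat)
  refine le_two_div_mul_of_mul_sq_le hc (by positivity) (norm_nonneg _) (κ := β + σ)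
    (by linarith) ?_
  rw [neg_add_eq_sub, le_inv_mul_iff₀ (Nat.cast_pos.2 hb0)] at hstab
  linarith

/-- Replace-one-sample argument-stability bound: under the replace-one
construction, with `φ = E_ξ[ℓ(·,ξ)]` differentiable, each `ℓ(·,ξ)` `σ`-almost convex and
`β`-smooth, `r` `γ`-strongly convex with `γ > σ` and `(γ − σ)b ≥ 2(σ + β)`,
`‖ŵ⁽ⁱ⁾ − ŵ‖ ≤ (2/((γ − σ)b))(‖∇ℓ(ŵ⁽ⁱ⁾,ξ_i) − ∇φ(ŵ⁽ⁱ⁾)‖ + ‖∇ℓ(ŵ,ξ_i') − ∇φ(ŵ)‖)`. -/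
theorem replace_one_sample_argument_stability
    {E : Type*} [NormedAddCommGroup E] [InnerProductSpace ℝ E] [CompleteSpace E]
    {Ξ : Type*} [MeasurableSpace Ξ] (D : Measure Ξ) [IsProbabilityMeasure D]
    (ℓ : E → Ξ → ℝ) (ℓ' : E → Ξ → E)
    (φ : E → ℝ) (φ' : E → E) (r : E → ℝ) (r' : E → E)
    (β σ γ : ℝ) (b : ℕ) (hb0 : 0 < b)
    (hσ : 0 ≤ σ) (hγ : σ < γ)
    (hφdef : ∀ w, φ w = ∫ ξ, ℓ w ξ ∂D)
    (hℓdiff : ∀ w ξ, HasGradientAt (fun x => ℓ x ξ) (ℓ' w ξ) w)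
    (hℓsmooth : ∀ ξ w w', ‖ℓ' w ξ - ℓ' w' ξ‖ ≤ β * ‖w - w'‖)
    (hℓalmost : ∀ ξ w w', ℓ w ξ - ℓ w' ξ - ⟪ℓ' w' ξ, w - w'⟫ ≥ -(σ / 2) * ‖w - w'‖ ^ 2)
    (hφdiff : ∀ w, HasGradientAt φ (φ' w) w)
    (hunbiased : ∀ w, ∫ ξ, ℓ' w ξ ∂D = φ' w)
    (hrdiff : ∀ w, HasGradientAt r (r' w) w)
    (hrstrong : ∀ w w', r w - r w' - ⟪r' w', w - w'⟫ ≥ γ / 2 * ‖w - w'‖ ^ 2)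
    (hsample : (γ - σ) * b ≥ 2 * (σ + β))
    (ξs : Fin b → Ξ) (i : Fin b) (ξ' : Ξ)
    (wHat wHatI : E)
    (hwHat : ∀ x, (b : ℝ)⁻¹ * ∑ j, ℓ wHat (ξs j) + r wHat
          ≤ (b : ℝ)⁻¹ * ∑ j, ℓ x (ξs j) + r x)
    (hwHatI : ∀ x,
        (b : ℝ)⁻¹ * ∑ j, ℓ wHatI (Function.update ξs i ξ' j) + r wHatI
          ≤ (b : ℝ)⁻¹ * ∑ j, ℓ x (Function.update ξs i ξ' j) + r x) :
    ‖wHatI - wHat‖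
      ≤ 2 / ((γ - σ) * b)
          * (‖ℓ' wHatI (ξs i) - φ' wHatI‖ + ‖ℓ' wHat ξ' - φ' wHat‖) :=
  replace_one_sample_argument_stability_general D ℓ ℓ' φ φ' r r' β σ γ b hb0 hγ hℓdiff hℓsmooth
    hℓalmost hφdiff hunbiased hrdiff hrstrong hsample ξs i ξ' wHat wHatI hwHat hwHatI
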